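/- Lemma (crucial star lemma, part (c)): Let τ be a tree on {1,...,m+r}, k a cloud (k > m), s, s' distinct stars (≤ m) with {s,s'} ∉ E(τ). If both {k,s} ∈ E'(τ) and {k,s'} ∈ E'(τ), then {s,s'} ∈ E'(τ). -/

import Mathlib

/-- The larger endpoint of an edge (an unordered pair). -/
def esup {n : ℕ} (e : Sym2 (Fin n)) : Fin n :=
  Sym2.lift ⟨fun a b => max a b, fun a b => max_comm a b⟩ e

/-- The smaller endpoint of an edge (an unordered pair). -/
def einf {n : ℕ} (e : Sym2 (Fin n)) : Fin n :=
  Sym2.lift ⟨fun a b => min a b, fun a b => min_comm a b⟩ e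

/-- The total order ≺ on edges: `{i,j} ≺ {i',j'}` (with `i<j`, `i'<j'`) iff `j' < j`,
or `j = j'` and `i' < i`. -/
def eprec {n : ℕ} (e e' : Sym2 (Fin n)) : Prop :=
  esup e' < esup e ∨ (esup e = esup e' ∧ einf e' < einf e)

/-!
Join the τ-paths from the cloud `k` to the stars `s` and `s'`: since τ is a tree, the τ-path
from `s` to `s'` only uses edges of these two paths. Each such edge is ≺-smaller than `{k,s}`
or `{k,s'}`, whose larger endpoint is `k`, so its larger endpoint is at least `k`. As
`s, s' < m ≤ k`, it therefore beats `{s,s'}` already on larger endpoints.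
-/

namespace SimpleGraph

variable {V : Type*} {G : SimpleGraph V}

theorem IsAcyclic.edges_subset_of_isPath (hG : G.IsAcyclic) {u v : V} {p : G.Walk u v}
    (hp : p.IsPath) (w : G.Walk u v) : p.edges ⊆ w.edges := by
  classical
  obtain rfl : p = w.bypass :=
    congrArg Subtype.val ((hG.subsingleton_path u v).elim ⟨p, hp⟩ ⟨w.bypass, w.bypass_isPath⟩)
  exact w.edges_bypass_subset_edges

theorem IsAcyclic.forall_mem_edges_of_isPath_of_reachable (hG : G.IsAcyclic)
    {P : Sym2 V → Prop} {k u v : V} (hku : G.Reachable k u) (hkv : G.Reachable k v)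
    (hu : ∀ q : G.Walk k u, q.IsPath → ∀ e ∈ q.edges, P e)
    (hv : ∀ q : G.Walk k v, q.IsPath → ∀ e ∈ q.edges, P e) :
    ∀ p : G.Walk u v, p.IsPath → ∀ e ∈ p.edges, P e := by
  classical
  intro p hp e he
  obtain ⟨qu⟩ := hku
  obtain ⟨qv⟩ := hkv
  have hmem := hG.edges_subset_of_isPath hp (qu.bypass.reverse.append qv.bypass) he
  rw [Walk.edges_append, Walk.edges_reverse, List.mem_append, List.mem_reverse] at hmem
  rcases hmem with h | h
  · exact hu _ qu.bypass_isPath e h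
  · exact hv _ qv.bypass_isPath e h

end SimpleGraph

section EdgeOrder

variable {n : ℕ}

@[simp]
theorem esup_mk (a b : Fin n) : esup s(a, b) = max a b := rfl

theorem esup_le_of_eprec {e e' : Sym2 (Fin n)} (h : eprec e e') : esup e' ≤ esup e :=
  h.elim le_of_lt fun h => h.1.ge

theorem le_esup_of_eprec_mk_of_le {a k : Fin n} (hak : a ≤ k) {e : Sym2 (Fin n)}
    (h : eprec e s(k, a)) : k ≤ esup e := by
  simpa [max_eq_left hak] using esup_le_of_eprec h

end EdgeOrder

theorem stmt10_general (m r : ℕ) (τ : SimpleGraph (Fin (m + r))) (hτ : τ.IsTree)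
    (k s s' : Fin (m + r)) (hk : m ≤ (k : ℕ)) (hs : (s : ℕ) < m) (hs' : (s' : ℕ) < m)
    (hks2 : ∀ p : τ.Walk k s, p.IsPath → ∀ e ∈ p.edges, eprec e s(k, s))
    (hks'2 : ∀ p : τ.Walk k s', p.IsPath → ∀ e ∈ p.edges, eprec e s(k, s')) :
    ∀ p : τ.Walk s s', p.IsPath → ∀ e ∈ p.edges, eprec e s(s, s') := by
  have hsk : s ≤ k := by omega
  have hs'k : s' ≤ k := by omega
  have hk_le : ∀ p : τ.Walk s s', p.IsPath → ∀ e ∈ p.edges, k ≤ esup e :=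
    hτ.isAcyclic.forall_mem_edges_of_isPath_of_reachable
      (hτ.connected.preconnected k s) (hτ.connected.preconnected k s')
      (fun q hq e he => le_esup_of_eprec_mk_of_le hsk (hks2 q hq e he))
      (fun q hq e he => le_esup_of_eprec_mk_of_le hs'k (hks'2 q hq e he))
  intro p hp e he
  have hmax : max s s' < k := max_lt (by omega) (by omega)
  exact Or.inl (by simpa using hmax.trans_le (hk_le p hp e he))

/-- Crucial star lemma, part (c): if `{k,s} ∈ E'(τ)` and `{k,s'} ∈ E'(τ)` with `k` a cloud and
`s, s'` distinct stars not directly linked in `τ`, then `{s,s'} ∈ E'(τ)`. -/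
theorem stmt10 (m r : ℕ) (τ : SimpleGraph (Fin (m + r))) (hτ : τ.IsTree)
    (k s s' : Fin (m + r)) (hk : m ≤ (k : ℕ)) (hs : (s : ℕ) < m) (hs' : (s' : ℕ) < m)
    (hne : s ≠ s') (hss' : ¬ τ.Adj s s')
    (hks1 : ¬ τ.Adj k s)
    (hks2 : ∀ p : τ.Walk k s, p.IsPath → ∀ e ∈ p.edges, eprec e s(k, s))
    (hks'1 : ¬ τ.Adj k s')
    (hks'2 : ∀ p : τ.Walk k s', p.IsPath → ∀ e ∈ p.edges, eprec e s(k, s')) :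
    ∀ p : τ.Walk s s', p.IsPath → ∀ e ∈ p.edges, eprec e s(s, s') :=
  stmt10_general m r τ hτ k s s' hk hs hs' hks2 hks'2
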